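/- Let P be the generic 5×5 skew-symmetric matrix with entries x_{ij} over a commutative ring, and let v be the vector with entries v_i = (−1)^{i−1}·Pf(P,i), where Pf(P,i) is the Pfaffian of the skew-symmetric matrix obtained from P by deleting row and column i. Then P·v = 0. -/
import Mathlib


open MvPolynomial

namespace Stmt18

/-- Variables: `x₀`, `x_{ij}` for `1 ≤ i < j ≤ 5` (0-indexed), and `y₁,…,y₅`. -/
abbrev V (_ : Type*) := Unit ⊕ {p : Fin 5 × Fin 5 // p.1 < p.2} ⊕ Fin 5

variable (k : Type*) [Field k]

noncomputable def x0 : MvPolynomial (V k) k := X (Sum.inl ())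

noncomputable def y (i : Fin 5) : MvPolynomial (V k) k := X (Sum.inr (Sum.inr i))

/-- The generic 5×5 skew-symmetric matrix `P`. -/
noncomputable def P : Matrix (Fin 5) (Fin 5) (MvPolynomial (V k) k) := fun i j =>
  if h : i < j then X (Sum.inr (Sum.inl ⟨(i, j), h⟩))
  else if h' : j < i then - X (Sum.inr (Sum.inl ⟨(j, i), h'⟩))
  else 0

/-- `Pf(P,i)`: the Pfaffian of the 4×4 skew-symmetric matrix obtained from `P`
by deleting the `i`-th row and column. -/
noncomputable def pfDel (i : Fin 5) : MvPolynomial (V k) k :=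
  let s := i.succAbove
  P k (s 0) (s 1) * P k (s 2) (s 3)
    - P k (s 0) (s 2) * P k (s 1) (s 3)
    + P k (s 0) (s 3) * P k (s 1) (s 2)


lemma Pdef (i j : Fin 5) (h : i < j) :
    P k i j = X (Sum.inr (Sum.inl ⟨(i, j), h⟩)) := by simp [P, h]

lemma Pneg (i j : Fin 5) (h : i < j) :
    P k j i = - X (Sum.inr (Sum.inl ⟨(i, j), h⟩)) := by
  simp [P, h, not_lt_of_gt h]

lemma Pdiag (i : Fin 5) : P k i i = 0 := by simp [P]

/-- The vector of signed sub-Pfaffians `vᵢ = (−1)^{i−1} Pf(P,i)` (0-indexed: `(−1)^i`). -/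
noncomputable def v (i : Fin 5) : MvPolynomial (V k) k :=
  (-1 : MvPolynomial (V k) k) ^ (i : ℕ) * pfDel k i

set_option maxRecDepth 20000 in
set_option maxHeartbeats 1600000 in
/-- The generic 5×5 skew-symmetric matrix kills its vector of signed sub-Pfaffians. -/
theorem stmt_18 : (P k).mulVec (v k) = 0 := by
  funext i
  fin_cases i <;>
  · simp only [show (⟨0, by omega⟩ : Fin 5) = 0 from rfl, show (⟨1, by omega⟩ : Fin 5) = 1 from rfl, show (⟨2, by omega⟩ : Fin 5) = 2 from rfl, show (⟨3, by omega⟩ : Fin 5) = 3 from rfl, show (⟨4, by omega⟩ : Fin 5) = 4 from rfl]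
    simp only [Matrix.mulVec, dotProduct, Pi.zero_apply,
      Fin.sum_univ_five, v, pfDel, Fin.isValue,
      show (((0:Fin 5)).succAbove 0) = 1 from rfl, show (((0:Fin 5)).succAbove 1) = 2 from rfl, show (((0:Fin 5)).succAbove 2) = 3 from rfl, show (((0:Fin 5)).succAbove 3) = 4 from rfl, show (((1:Fin 5)).succAbove 0) = 0 from rfl, show (((1:Fin 5)).succAbove 1) = 2 from rfl, show (((1:Fin 5)).succAbove 2) = 3 from rfl, show (((1:Fin 5)).succAbove 3) = 4 from rfl, show (((2:Fin 5)).succAbove 0) = 0 from rfl, show (((2:Fin 5)).succAbove 1) = 1 from rfl, show (((2:Fin 5)).succAbove 2) = 3 from rfl, show (((2:Fin 5)).succAbove 3) = 4 from rfl, show (((3:Fin 5)).succAbove 0) = 0 from rfl, show (((3:Fin 5)).succAbove 1) = 1 from rfl, show (((3:Fin 5)).succAbove 2) = 2 from rfl, show (((3:Fin 5)).succAbove 3) = 4 from rfl, show (((4:Fin 5)).succAbove 0) = 0 from rfl, show (((4:Fin 5)).succAbove 1) = 1 from rfl, show (((4:Fin 5)).succAbove 2) = 2 from rfl, show (((4:Fin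 5)).succAbove 3) = 3 from rfl, show (((0:Fin 5)):ℕ) = 0 from rfl, show (((1:Fin 5)):ℕ) = 1 from rfl, show (((2:Fin 5)):ℕ) = 2 from rfl, show (((3:Fin 5)):ℕ) = 3 from rfl, show (((4:Fin 5)):ℕ) = 4 from rfl]
    simp (config := { decide := true }) only [Pdef, Pneg, Pdiag]
    ring

end Stmt18
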